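/- If S is a compact hyperbolic surface, then sys(S) ≤ 2·log(area(S)/π + 2), where sys(S) is the systole of S. -/

import Mathlib

open MeasureTheory UpperHalfPlane Matrix Real
open scoped MatrixGroups

noncomputable instance : MeasurableSpace ℍ := borel ℍ

/-- The hyperbolic area measure on the upper half-plane, with density `1 / y²`
with respect to Lebesgue measure. -/
noncomputable def hyperbolicArea : Measure ℍ :=
  Measure.comap (fun z : ℍ => (z : ℂ))
    (volume.withDensity fun z : ℂ => ENNReal.ofReal (1 / z.im ^ 2))

/-!
If every nontrivial element of `Γ` moved `i` by at least `2R`, the `Γ`-translates of the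
hyperbolic ball `B(i, R)` would be pairwise disjoint, so the area `2π (cosh R - 1)` of that ball
could not exceed the area `A` of a fundamental domain. For `R = log (A/π + 2)` however
`2π (cosh R - 1) = A + π e^{-R} > A`.

The hyperbolic ball `B(i, R)` is the Euclidean disc of center `i cosh R` and radius `sinh R`;
its area is computed by integrating `1 / y²` along horizontal chords.
-/

open Metric Set Function
open scoped ENNReal Pointwise

instance Subgroup.isIsometricSMul {G X : Type*} [Group G] [MulAction G X] [PseudoEMetricSpace X]
    [IsIsometricSMul G X] (H : Subgroup G) : IsIsometricSMul H X :=
  ⟨fun h => isometry_smul X (h : G)⟩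

theorem countable_of_finite_smul_image_inter {G X : Type*} [Group G] [MulAction G X]
    [TopologicalSpace X] [SigmaCompactSpace X] [Nonempty X]
    (h : ∀ K : Set X, IsCompact K → {g : G | ((g • ·) '' K ∩ K).Nonempty}.Finite) :
    Countable G := by
  obtain ⟨x⟩ := ‹Nonempty X›
  have hcover : (univ : Set G) ⊆ ⋃ n, {g : G |
      ((g • ·) '' insert x (compactCovering X n) ∩ insert x (compactCovering X n)).Nonempty} := by
    intro g _
    obtain ⟨n, hn⟩ := exists_mem_compactCovering (g • x)
    exact mem_iUnion.2 ⟨n, g • x, mem_image_of_mem _ (mem_insert x _), mem_insert_of_mem x hn⟩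
  rw [← countable_univ_iff]
  exact (countable_iUnion fun n =>
    (h _ ((isCompact_compactCovering X n).insert x)).countable).mono hcover

section IsometricAction

variable {G X : Type*} [Group G] [MulAction G X] [PseudoMetricSpace X] [IsIsometricSMul G X]

theorem pairwise_disjoint_smul_ball {x : X} {R : ℝ}
    (h : ∀ g : G, g ≠ 1 → 2 * R ≤ dist x (g • x)) :
    Pairwise (Disjoint on fun g : G => g • ball x R) := by
  intro g₁ g₂ hne
  simp only [onFun, Metric.smul_ball]
  refine ball_disjoint_ball ?_
  calc R + R = 2 * R := by ring
    _ ≤ dist x ((g₁⁻¹ * g₂) • x) := h _ (mt inv_mul_eq_one.1 hne)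
    _ = dist (g₁ • x) (g₂ • x) := by rw [mul_smul, ← dist_smul g₁, smul_inv_smul]

theorem MeasureTheory.IsFundamentalDomain.exists_ne_one_dist_smul_lt [MeasurableSpace X]
    [OpensMeasurableSpace X] [Countable G] [MeasurableConstSMul G X] {μ : Measure X}
    [SMulInvariantMeasure G X μ] {F : Set X} (hF : IsFundamentalDomain G F μ) (x : X) {R : ℝ}
    (hR : μ F < μ (ball x R)) : ∃ g : G, g ≠ 1 ∧ dist x (g • x) < 2 * R := by
  by_contra! h
  refine hR.not_ge (hF.measure_le_of_pairwise_disjoint measurableSet_ball.nullMeasurableSet ?_)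
  exact fun g₁ g₂ hne =>
    ((pairwise_disjoint_smul_ball h hne).mono inter_subset_left inter_subset_left).aedisjoint

end IsometricAction

theorem HasDerivAt.arcsin_of_one_sub_sq_eq {f : ℝ → ℝ} {f' q x : ℝ} (hf : HasDerivAt f f' x)
    (hq : 0 < q) (hfq : 1 - f x ^ 2 = q ^ 2) :
    HasDerivAt (fun y => arcsin (f y)) (f' / q) x := by
  have hlt : |f x| < 1 := by
    rw [← sq_lt_one_iff_abs_lt_one]; nlinarith
  have h := (hasDerivAt_arcsin (abs_lt.1 hlt).1.ne' (abs_lt.1 hlt).2.ne).comp x hf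
  rwa [hfq, Real.sqrt_sq hq.le, one_div_mul_eq_div] at h

/- `2 √(r² - (y - c)²)` is the length of the horizontal chord at height `y` of the Euclidean disc
of center `c i` and radius `r`. -/

theorem continuousOn_chord_div_sq {c r : ℝ} (h : 0 < c - r) :
    ContinuousOn (fun y => 2 * √(r ^ 2 - (y - c) ^ 2) / y ^ 2) (Icc (c - r) (c + r)) :=
  ContinuousOn.div (by fun_prop) (by fun_prop) fun y hy => pow_ne_zero 2 (by linarith [hy.1])

noncomputable def chordAntideriv (c r y : ℝ) : ℝ :=
  -2 * (√(r ^ 2 - (y - c) ^ 2) / y) - 2 * arcsin ((y - c) / r)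
    + 2 * c * arcsin ((c * y - 1) / (r * y))

theorem hasDerivAt_chordAntideriv {c r y : ℝ} (hcr : c ^ 2 - r ^ 2 = 1) (hr : 0 < r)
    (hy0 : 0 < y) (hy : (y - c) ^ 2 < r ^ 2) :
    HasDerivAt (chordAntideriv c r) (2 * √(r ^ 2 - (y - c) ^ 2) / y ^ 2) y := by
  set s := √(r ^ 2 - (y - c) ^ 2) with hs_def
  have hs : 0 < s := Real.sqrt_pos.2 (by linarith)
  have hs2 : s ^ 2 = r ^ 2 - (y - c) ^ 2 := Real.sq_sqrt (by linarith)
  have hsqrt : HasDerivAt (fun y => √(r ^ 2 - (y - c) ^ 2)) (-(y - c) / s) y := by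
    have h : HasDerivAt (fun y => r ^ 2 - (y - c) ^ 2) (-(2 * (y - c))) y := by
      simpa using ((hasDerivAt_id' y).sub_const c).pow 2 |>.const_sub (r ^ 2)
    refine (h.sqrt (by positivity)).congr_deriv ?_
    rw [← hs_def]
    field_simp
  have harcsin₁ : HasDerivAt (fun y => arcsin ((y - c) / r)) (1 / s) y := by
    have h : HasDerivAt (fun y => (y - c) / r) (1 / r) y := by
      simpa using ((hasDerivAt_id' y).sub_const c).div_const r
    refine (h.arcsin_of_one_sub_sq_eq (div_pos hs hr) ?_).congr_deriv ?_
    · field_simp; linarith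
    · field_simp
  have harcsin₂ : HasDerivAt (fun y => arcsin ((c * y - 1) / (r * y))) (1 / (y * s)) y := by
    have h : HasDerivAt (fun y => (c * y - 1) / (r * y)) (1 / (r * y ^ 2)) y := by
      refine ((((hasDerivAt_id' y).const_mul c).sub_const 1).div
        ((hasDerivAt_id' y).const_mul r) (by positivity)).congr_deriv ?_
      field_simp; ring
    refine (h.arcsin_of_one_sub_sq_eq (div_pos hs (mul_pos hr hy0)) ?_).congr_deriv ?_
    · field_simp; linear_combination (1 - y ^ 2) * hcr - hs2
    · field_simp
  refine (((hsqrt.div (hasDerivAt_id' y) hy0.ne').const_mul (-2)).sub (harcsin₁.const_mul 2)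
    |>.add (harcsin₂.const_mul (2 * c))).congr_deriv ?_
  rw [← hs_def]
  field_simp
  ring

theorem integral_chord_div_sq {c r : ℝ} (hcr : c ^ 2 - r ^ 2 = 1) (hr : 0 < r) (hc : 0 < c) :
    ∫ y in (c - r)..(c + r), 2 * √(r ^ 2 - (y - c) ^ 2) / y ^ 2 = 2 * π * (c - 1) := by
  have hrc : r < c := by nlinarith
  have hpos : ∀ y ∈ Icc (c - r) (c + r), y ≠ 0 := fun y hy => by linarith [hy.1]
  rw [intervalIntegral.integral_eq_sub_of_hasDerivAt_of_le (by linarith) ?_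
    (fun y hy => hasDerivAt_chordAntideriv hcr hr (by linarith [hy.1]) (by nlinarith [hy.1, hy.2]))
    ((continuousOn_chord_div_sq (by linarith)).intervalIntegrable_of_Icc (by linarith))]
  · have hb : (c * (c + r) - 1) / (r * (c + r)) = 1 := by
      rw [div_eq_one_iff_eq (by positivity)]; linear_combination hcr
    have ha : (c * (c - r) - 1) / (r * (c - r)) = -1 := by
      rw [div_eq_iff (mul_pos hr (by linarith)).ne']; linear_combination hcr
    simp only [chordAntideriv, hb, ha, add_sub_cancel_left, sub_sub_cancel_left, neg_sq, sub_self,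
      Real.sqrt_zero, neg_div, div_self hr.ne', arcsin_one, arcsin_neg_one]
    ring
  · have : ContinuousOn (fun y => arcsin ((c * y - 1) / (r * y))) (Icc (c - r) (c + r)) :=
      continuous_arcsin.comp_continuousOn
        (ContinuousOn.div (by fun_prop) (by fun_prop) fun y hy => mul_ne_zero hr.ne' (hpos y hy))
    have : ContinuousOn (fun y => √(r ^ 2 - (y - c) ^ 2) / y) (Icc (c - r) (c + r)) :=
      ContinuousOn.div (by fun_prop) (by fun_prop) hpos
    unfold chordAntideriv
    fun_prop

theorem lintegral_ball_comp_im (z : ℂ) {r : ℝ} (hr : 0 < r) {g : ℝ → ℝ≥0∞} (hg : Measurable g) :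
    ∫⁻ w in ball z r, g w.im = ∫⁻ y, ENNReal.ofReal (2 * √(r ^ 2 - (y - z.im) ^ 2)) * g y := by
  set D : Set (ℝ × ℝ) := {p | (p.1 - z.re) ^ 2 + (p.2 - z.im) ^ 2 < r ^ 2}
  have hD : MeasurableSet D := measurableSet_lt (by fun_prop) measurable_const
  have hball : ball z r = Complex.measurableEquivRealProd ⁻¹' D := by
    ext w
    rw [mem_ball, Complex.dist_eq_re_im, Real.sqrt_lt' hr]
    rfl
  have hslice : ∀ y, {x : ℝ | (x, y) ∈ D} = ball z.re √(r ^ 2 - (y - z.im) ^ 2) := by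
    intro y
    ext x
    rw [mem_ball, Real.dist_eq, Real.lt_sqrt (abs_nonneg _), sq_abs, lt_sub_iff_add_lt]
    rfl
  rw [hball]
  refine (Complex.volume_preserving_equiv_real_prod.setLIntegral_comp_preimage_emb
    Complex.measurableEquivRealProd.measurableEmbedding (fun p : ℝ × ℝ => g p.2) D).trans ?_
  have hgD : Measurable (D.indicator fun p : ℝ × ℝ => g p.2) :=
    (hg.comp measurable_snd).indicator hD
  rw [← lintegral_indicator hD, Measure.volume_eq_prod, lintegral_prod_symm _ hgD.aemeasurable]
  refine lintegral_congr fun y => ?_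
  have hsection : ∀ x, D.indicator (fun p => g p.2) (x, y) =
      {x | (x, y) ∈ D}.indicator (fun _ => g y) x :=
    fun x => by by_cases hx : (x, y) ∈ D <;> simp [hx]
  simp only [hsection, hslice, lintegral_indicator_const measurableSet_ball, Real.volume_ball, mul_comm]

theorem lintegral_ball_inv_im_sq {z : ℂ} {r : ℝ} (hr : 0 < r) (hz : 0 < z.im)
    (hzr : z.im ^ 2 - r ^ 2 = 1) :
    ∫⁻ w in ball z r, ENNReal.ofReal (1 / w.im ^ 2) = ENNReal.ofReal (2 * π * (z.im - 1)) := by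
  have hrz : r < z.im := by nlinarith
  have hsupp : (fun y => ENNReal.ofReal (2 * √(r ^ 2 - (y - z.im) ^ 2)) *
      ENNReal.ofReal (1 / y ^ 2)).support ⊆ Ioc (z.im - r) (z.im + r) := by
    refine support_subset_iff'.2 fun y hy => ?_
    have : r ^ 2 - (y - z.im) ^ 2 ≤ 0 := by
      rw [mem_Ioc, not_and_or, not_lt, not_le] at hy
      rcases hy with hy | hy <;> nlinarith
    simp [Real.sqrt_eq_zero'.2 this]
  have hint : IntegrableOn (fun y => 2 * √(r ^ 2 - (y - z.im) ^ 2) / y ^ 2)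
      (Ioc (z.im - r) (z.im + r)) :=
    ((continuousOn_chord_div_sq (by linarith)).integrableOn_Icc).mono_set Ioc_subset_Icc_self
  rw [lintegral_ball_comp_im (g := fun y => ENNReal.ofReal (1 / y ^ 2)) _ hr (by fun_prop),
    ← integral_chord_div_sq hzr hr hz, intervalIntegral.integral_of_le (by linarith),
    ofReal_integral_eq_lintegral_ofReal hint (ae_of_all _ fun y => by positivity),
    ← setLIntegral_eq_of_support_subset hsupp]
  refine setLIntegral_congr_fun measurableSet_Ioc fun y _ => ?_
  rw [← ENNReal.ofReal_mul (by positivity), mul_one_div]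

instance : BorelSpace ℍ := ⟨rfl⟩

theorem hyperbolicArea_apply {s : Set ℍ} (hs : MeasurableSet s) :
    hyperbolicArea s = ∫⁻ w in ((↑) : ℍ → ℂ) '' s, ENNReal.ofReal (1 / w.im ^ 2) := by
  have he : MeasurableEmbedding ((↑) : ℍ → ℂ) := isOpenEmbedding_coe.measurableEmbedding
  rw [hyperbolicArea, he.comap_apply, withDensity_apply _ (he.measurableSet_image.2 hs)]

/- Mathlib already equips `ℍ` with the σ-algebra pulled back from `ℂ` and with the
`GL(2, ℝ)`-invariant measure `volume` of density `1 / y²`. The Borel σ-algebra used here equals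
that one but not definitionally, so `hyperbolicArea` and `volume` are compared set by set. -/

theorem measurableSet_iff_measurableSet_comap_coe {s : Set ℍ} :
    MeasurableSet s ↔ MeasurableSet[UpperHalfPlane.instMeasurableSpace] s := by
  rw [BorelSpace.measurable_eq (α := ℍ),
    @BorelSpace.measurable_eq ℍ _ UpperHalfPlane.instMeasurableSpace _]

theorem hyperbolicArea_apply_eq_volume (s : Set ℍ) : hyperbolicArea s = volume s := by
  have hmeas : ∀ t : Set ℍ, MeasurableSet t → hyperbolicArea t = volume t := by
    intro t ht
    rw [hyperbolicArea_apply ht, UpperHalfPlane.volume_eq_lintegral]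
    refine setLIntegral_congr_fun
      (isOpenEmbedding_coe.measurableEmbedding.measurableSet_image.2 ht) ?_
    rintro _ ⟨z, -, rfl⟩
    dsimp only
    rw [← ENNReal.ofReal_coe_nnreal]
    congr 1
    push_cast
    rw [coe_im, Real.norm_of_nonneg z.im_pos.le, _root_.one_div_pow]
  rw [measure_eq_iInf, @measure_eq_iInf ℍ UpperHalfPlane.instMeasurableSpace]
  simp_rw [← measurableSet_iff_measurableSet_comap_coe]
  exact iInf_congr fun t => iInf_congr fun _ => iInf_congr fun ht => hmeas t ht

instance : SMulInvariantMeasure SL(2, ℝ) ℍ hyperbolicArea where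
  measure_preimage_smul g s hs := by
    simp only [hyperbolicArea_apply_eq_volume]
    exact SMulInvariantMeasure.measure_preimage_smul (SpecialLinearGroup.mapGL ℝ g)
      (measurableSet_iff_measurableSet_comap_coe.1 hs)

theorem hyperbolicArea_ball_I {R : ℝ} (hR : 0 < R) :
    hyperbolicArea (ball I R) = ENNReal.ofReal (2 * π * (cosh R - 1)) := by
  have him : (I.center R : ℂ).im = cosh R := by rw [coe_im, center_im, I_im, one_mul]
  rw [hyperbolicArea_apply measurableSet_ball, image_coe_ball, I_im, one_mul, ← him]
  exact lintegral_ball_inv_im_sq (sinh_pos_iff.2 hR) (him ▸ cosh_pos R)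
    (him ▸ cosh_sq_sub_sinh_sq R)

theorem lt_two_pi_mul_cosh_log_sub_one {A : ℝ} (hA : 0 < A) :
    A < 2 * π * (cosh (log (A / π + 2)) - 1) := by
  have hu : 0 < A / π + 2 := by positivity
  rw [cosh_log hu]
  have : 0 < π * (A / π + 2)⁻¹ := by positivity
  have : π * (A / π + 2) = A + 2 * π := by field_simp
  nlinarith

theorem systole_le_of_area_general (Γ : Subgroup SL(2, ℝ))
    (hdisc : ∀ K : Set ℍ, IsCompact K → {γ : Γ | ((γ • ·) '' K ∩ K).Nonempty}.Finite)
    (F : Set ℍ) (hF : IsFundamentalDomain Γ F hyperbolicArea)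
    (A : ℝ) (hA : 0 < A) (hAF : hyperbolicArea F = ENNReal.ofReal A) :
    sInf {r : ℝ | ∃ γ : Γ, γ ≠ 1 ∧ ∃ z : ℍ, r = dist z (γ • z)} ≤
      2 * Real.log (A / π + 2) := by
  have : Countable Γ := countable_of_finite_smul_image_inter hdisc
  have hR : 0 < log (A / π + 2) := log_pos (by linarith [div_pos hA pi_pos])
  have harea : hyperbolicArea F < hyperbolicArea (ball I (log (A / π + 2))) := by
    have hlt := lt_two_pi_mul_cosh_log_sub_one hA
    rw [hAF, hyperbolicArea_ball_I hR, ENNReal.ofReal_lt_ofReal_iff (by linarith)]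
    exact hlt
  obtain ⟨γ, hγ, hlt⟩ := hF.exists_ne_one_dist_smul_lt I harea
  have hbdd : BddBelow {r : ℝ | ∃ γ : Γ, γ ≠ 1 ∧ ∃ z : ℍ, r = dist z (γ • z)} :=
    ⟨0, fun _ ⟨_, _, _, hr⟩ => hr ▸ dist_nonneg⟩
  exact (csInf_le hbdd ⟨γ, hγ, I, rfl⟩).trans hlt.le

/-- If `S = Γ\ℍ²` is a compact hyperbolic surface (`Γ ≤ SL(2, ℝ)` discrete and
acting freely, with compact quotient) of area `A`, then its systole—the infimum of
translation lengths of the nontrivial elements of `Γ`—satisfies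
`sys(S) ≤ 2 log(A/π + 2)`. -/
theorem systole_le_of_area (Γ : Subgroup SL(2, ℝ))
    (hdisc : ∀ K : Set ℍ, IsCompact K → {γ : Γ | ((γ • ·) '' K ∩ K).Nonempty}.Finite)
    (hfree : ∀ γ : Γ, γ ≠ 1 → ∀ z : ℍ, γ • z ≠ z)
    (hcpt : CompactSpace (Quotient (MulAction.orbitRel Γ ℍ)))
    (F : Set ℍ) (hF : IsFundamentalDomain Γ F hyperbolicArea)
    (A : ℝ) (hA : 0 < A) (hAF : hyperbolicArea F = ENNReal.ofReal A) :
    sInf {r : ℝ | ∃ γ : Γ, γ ≠ 1 ∧ ∃ z : ℍ, r = dist z (γ • z)} ≤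
      2 * Real.log (A / π + 2) :=
  systole_le_of_area_general Γ hdisc F hF A hA hAF
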